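/- There exists a constant C, independent of n and x, such that for every n ≥ 1 and every x ∈ C^{2r+1}[0,1], ‖K(I − Pₙ)K(I − Pₙ)x‖∞ ≤ C ‖x^{(2r+1)}‖∞ h^{2r+3}. -/

import Mathlib

open Set MeasureTheory

/-- The Fredholm integral operator with a Green's-function-type kernel. -/
noncomputable def Kop (κ₁ κ₂ : ℝ → ℝ → ℝ) (x : ℝ → ℝ) (s : ℝ) : ℝ :=
  ∫ t in (0:ℝ)..1, (if t ≤ s then κ₁ s t else κ₂ s t) * x t

/-- The supremum norm on `[0,1]`. -/
noncomputable def supNorm (x : ℝ → ℝ) : ℝ := ⨆ t : Set.Icc (0:ℝ) 1, |x t.1|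

/-- The index `j ∈ {1,…,n}` such that `s` belongs to the subinterval `[t_{j−1}, t_j)` of the
uniform partition `t_j = j/n` (with `j = n` for `s = 1`). -/
noncomputable def interpIdx (n : ℕ) (s : ℝ) : ℕ := min n (⌊s * n⌋.toNat + 1)

/-- The `2r+1` equidistant collocation points `τ_j^k = t_{j−1} + (k/(2r))·h` in the subinterval
`[t_{j−1}, t_j]`, where `h = 1/n`. -/
noncomputable def nodes (r n j : ℕ) : Fin (2 * r + 1) → ℝ :=
  fun k => ((j:ℝ) - 1) / n + ((k.1:ℝ) / (2 * r)) * (1 / n)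

/-- The piecewise interpolatory projection `Pₙ`: on each subinterval `[t_{j−1}, t_j]`, `Pₙ x`
is the unique polynomial of degree `≤ 2r` interpolating `x` at the `2r+1` equidistant
collocation points of that subinterval. -/
noncomputable def Pn (r n : ℕ) (x : ℝ → ℝ) (s : ℝ) : ℝ :=
  Polynomial.eval s
    (Lagrange.interpolate (Finset.univ : Finset (Fin (2 * r + 1)))
      (nodes r n (interpIdx n s)) (fun k => x (nodes r n (interpIdx n s) k)))

/-- The norm `‖x‖_{m,∞} = max_{0 ≤ i ≤ m} ‖x^{(i)}‖_∞` for `x ∈ C^m[0,1]`. -/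
noncomputable def normC (m : ℕ) (x : ℝ → ℝ) : ℝ :=
  ⨆ i : Fin (m + 1), ⨆ t : Set.Icc (0:ℝ) 1, |iteratedDerivWithin i.1 x (Set.Icc 0 1) t.1|


section AUX
open Polynomial Finset

lemma interpIdx_mem {n : ℕ} (hn : 1 ≤ n) {s : ℝ} (hs : s ∈ Icc (0:ℝ) 1) :
    1 ≤ interpIdx n s ∧ interpIdx n s ≤ n ∧
      ((interpIdx n s : ℝ) - 1) / n ≤ s ∧ s ≤ (interpIdx n s : ℝ) / n := by
  obtain ⟨hs0, hs1⟩ := hs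
  have hn0 : (0:ℝ) < n := by exact_mod_cast hn
  have hsn0 : (0:ℝ) ≤ s * n := mul_nonneg hs0 hn0.le
  have hfl0 : (0:ℤ) ≤ ⌊s * n⌋ := Int.floor_nonneg.2 hsn0
  set m : ℕ := (⌊s * n⌋).toNat with hm
  have hmval : (m : ℝ) ≤ s * n := by
    have := Int.floor_le (s * n)
    rwa [← Int.toNat_of_nonneg hfl0, Int.cast_natCast] at this
  have hmval' : s * n < (m : ℝ) + 1 := by
    have := Int.lt_floor_add_one (s * n)
    rwa [← Int.toNat_of_nonneg hfl0, Int.cast_natCast] at this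
  have hj1 : 1 ≤ interpIdx n s := le_min hn (Nat.le_add_left 1 m)
  refine ⟨hj1, min_le_left _ _, ?_, ?_⟩
  · -- ((j:ℝ)-1)/n ≤ s
    have hjm : interpIdx n s ≤ m + 1 := min_le_right _ _
    have : (interpIdx n s : ℝ) - 1 ≤ (m : ℝ) := by
      have : (interpIdx n s : ℝ) ≤ (m : ℝ) + 1 := by exact_mod_cast hjm
      linarith
    have : (interpIdx n s : ℝ) - 1 ≤ s * n := le_trans this hmval
    rw [div_le_iff₀ hn0]
    linarith
  · rcases le_or_gt (m + 1) n with h | h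
    · have hj : interpIdx n s = m + 1 := min_eq_right h
      rw [hj, le_div_iff₀ hn0]
      push_cast
      linarith
    · have hj : interpIdx n s = n := min_eq_left (by omega)
      rw [hj, le_div_iff₀ hn0]
      nlinarith

section NodesLemmas
variable {r n j : ℕ} (hr : 1 ≤ r) (hn : 1 ≤ n)

lemma nodes_sub (k i : Fin (2 * r + 1)) :
    nodes r n j k - nodes r n j i = ((k.1:ℝ) - i.1) / (2 * r) * (1 / n) := by
  simp only [nodes]
  ring

include hr hn in
lemma nodes_injective : Function.Injective (nodes r n j) := by
  intro k i h
  have hr0 : (0:ℝ) < 2 * r := by positivity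
  have hn0 : (0:ℝ) < n := by exact_mod_cast hn
  have := sub_eq_zero_of_eq h
  rw [nodes_sub] at this
  have : ((k.1:ℝ) - i.1) = 0 := by
    field_simp at this
    rw [mul_zero] at this
    exact this
  have : (k.1 : ℝ) = i.1 := by linarith
  exact Fin.ext (by exact_mod_cast this)

include hr hn in
lemma nodes_mem (k : Fin (2 * r + 1)) :
    nodes r n j k ∈ Icc (((j:ℝ) - 1) / n) ((j:ℝ) / n) := by
  have hr0 : (0:ℝ) < 2 * r := by positivity
  have hn0 : (0:ℝ) < n := by exact_mod_cast hn
  have hk2r : (k.1 : ℝ) ≤ 2 * r := by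
    have h := k.2
    have h2 : k.1 ≤ 2 * r := by omega
    exact_mod_cast h2
  have h01 : 0 ≤ (k.1:ℝ) / (2 * r) ∧ (k.1:ℝ) / (2 * r) ≤ 1 := by
    constructor
    · positivity
    · rw [div_le_one hr0]; exact hk2r
  constructor
  · simp only [nodes]
    have : 0 ≤ (k.1:ℝ) / (2 * r) * (1 / n) := by positivity
    linarith
  · simp only [nodes]
    have : (k.1:ℝ) / (2 * r) * (1 / n) ≤ 1 / n := by
      nlinarith [h01.1, h01.2, (one_div_pos.2 hn0).le]
    have hjn : ((j:ℝ) - 1) / n + 1 / n = (j:ℝ) / n := by ring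
    linarith

include hr hn in
lemma nodes_gap {k i : Fin (2 * r + 1)} (hki : k ≠ i) :
    1 / (2 * r * n) ≤ |nodes r n j k - nodes r n j i| := by
  have hr0 : (0:ℝ) < 2 * r := by positivity
  have hn0 : (0:ℝ) < n := by exact_mod_cast hn
  rw [nodes_sub, abs_mul, abs_div]
  have h1 : (1:ℝ) ≤ |(k.1:ℝ) - i.1| := by
    have hne : k.1 ≠ i.1 := fun h => hki (Fin.ext h)
    rcases lt_or_gt_of_ne hne with h | h
    · have : (k.1:ℝ) + 1 ≤ i.1 := by exact_mod_cast h
      rw [abs_sub_comm, abs_of_nonneg (by linarith)]; linarith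
    · have : (i.1:ℝ) + 1 ≤ k.1 := by exact_mod_cast h
      rw [abs_of_nonneg (by linarith)]; linarith
  have e1 : |(2 * (r:ℝ))| = 2 * r := abs_of_pos hr0
  have e2 : |1 / (n:ℝ)| = 1 / n := abs_of_pos (by positivity)
  rw [e1, e2]
  rw [one_div, mul_inv, ← one_div, ← one_div]
  have : 1 / (2 * (r:ℝ)) ≤ |(k.1:ℝ) - i.1| / (2 * r) := by
    gcongr
  calc 1 / (2 * (r:ℝ)) * (1 / n) ≤ |(k.1:ℝ) - i.1| / (2 * r) * (1 / n) := by
        apply mul_le_mul_of_nonneg_right this (by positivity)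
    _ = _ := rfl

end NodesLemmas

section BasisBound
variable {r n j : ℕ} (hr : 1 ≤ r) (hn : 1 ≤ n)

include hr hn in
lemma basis_bound {u : ℝ} (hu : u ∈ Icc (((j:ℝ) - 1) / n) ((j:ℝ) / n)) (k : Fin (2 * r + 1)) :
    |Polynomial.eval u (Lagrange.basis Finset.univ (nodes r n j) k)| ≤ (2 * r : ℝ) ^ (2 * r) := by
  set v := nodes r n j
  have hr0 : (0:ℝ) < 2 * r := by positivity
  have hn0 : (0:ℝ) < n := by exact_mod_cast hn
  rw [Lagrange.basis, Polynomial.eval_prod]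
  rw [abs_prod]
  have hcard : (Finset.univ.erase k).card = 2 * r := by
    rw [Finset.card_erase_of_mem (Finset.mem_univ k), Finset.card_univ, Fintype.card_fin]; omega
  calc ∏ i ∈ Finset.univ.erase k, |Polynomial.eval u (Lagrange.basisDivisor (v k) (v i))|
      ≤ ∏ i ∈ Finset.univ.erase k, (2 * r : ℝ) := by
        apply Finset.prod_le_prod (fun i _ => abs_nonneg _)
        intro i hi
        have hki : k ≠ i := (Finset.mem_erase.1 hi).1.symm
        rw [Lagrange.basisDivisor, Polynomial.eval_mul, Polynomial.eval_C,
          Polynomial.eval_sub, Polynomial.eval_X, Polynomial.eval_C, abs_mul, abs_inv]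
        have hgap : 1 / (2 * r * n) ≤ |v k - v i| := nodes_gap hr hn hki
        have hnum : |u - v i| ≤ 1 / n := by
          have hvi := nodes_mem hr hn (j := j) i
          rw [abs_le]
          constructor
          · have : ((j:ℝ) - 1) / n - (j:ℝ)/n = -(1/n) := by ring
            have h1 := hu.1; have h2 := hvi.2
            linarith [this]
          · have : (j:ℝ)/n - ((j:ℝ) - 1) / n = 1/n := by ring
            linarith [hu.2, hvi.1]
        have hpos : (0:ℝ) < |v k - v i| := lt_of_lt_of_le (by positivity) hgap
        calc |v k - v i|⁻¹ * |u - v i| ≤ (1 / (2 * (r:ℝ) * n))⁻¹ * (1/n) := by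
              apply mul_le_mul _ hnum (abs_nonneg _) (by positivity)
              exact inv_anti₀ (by positivity) hgap
          _ = 2 * r := by field_simp
    _ = (2 * r : ℝ) ^ (2 * r) := by rw [Finset.prod_const, hcard]

include hr hn in
/-- Generic interpolation error estimate on one subinterval. -/
lemma interp_err {f : ℝ → ℝ} {p : ℝ[X]} (hp : p.degree < (2 * r + 1 : ℕ)) {ε : ℝ}
    (hfp : ∀ u ∈ Icc (((j:ℝ) - 1) / n) ((j:ℝ) / n), |f u - p.eval u| ≤ ε)
    {s : ℝ} (hs : s ∈ Icc (((j:ℝ) - 1) / n) ((j:ℝ) / n)) :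
    |f s - Polynomial.eval s (Lagrange.interpolate Finset.univ (nodes r n j)
        (fun k => f (nodes r n j k)))| ≤ (1 + (2*r+1) * (2 * r : ℝ) ^ (2 * r)) * ε := by
  set v := nodes r n j
  have hinj : Set.InjOn v ↑(Finset.univ : Finset (Fin (2*r+1))) := Function.Injective.injOn (nodes_injective hr hn)
  have hcard : ((Finset.univ : Finset (Fin (2*r+1))).card) = 2*r+1 := by
    rw [Finset.card_univ, Fintype.card_fin]
  have hεnn : 0 ≤ ε := le_trans (abs_nonneg _) (hfp s hs)
  have hpeq : p = Lagrange.interpolate Finset.univ v (fun k => p.eval (v k)) := by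
    apply Lagrange.eq_interpolate hinj
    rwa [hcard]
  have key : Lagrange.interpolate Finset.univ v (fun k => f (v k))
      = p + Lagrange.interpolate Finset.univ v (fun k => f (v k) - p.eval (v k)) := by
    have : (fun k => f (v k)) = (fun k => p.eval (v k)) + (fun k => f (v k) - p.eval (v k)) := by
      funext k; simp
    rw [this, map_add, ← hpeq]
  rw [key]
  have : f s - Polynomial.eval s (p + Lagrange.interpolate Finset.univ v
      (fun k => f (v k) - p.eval (v k)))
      = (f s - p.eval s) - Polynomial.eval s (Lagrange.interpolate Finset.univ v
        (fun k => f (v k) - p.eval (v k))) := by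
    rw [Polynomial.eval_add]; ring
  rw [this]
  have hinterp_bound : |Polynomial.eval s (Lagrange.interpolate Finset.univ v
      (fun k => f (v k) - p.eval (v k)))| ≤ (2*r+1) * (2 * r : ℝ) ^ (2 * r) * ε := by
    rw [Lagrange.interpolate_apply, Polynomial.eval_finset_sum]
    calc |∑ i, Polynomial.eval s (Polynomial.C (f (v i) - p.eval (v i)) * Lagrange.basis Finset.univ v i)|
        ≤ ∑ i, |Polynomial.eval s (Polynomial.C (f (v i) - p.eval (v i)) * Lagrange.basis Finset.univ v i)| :=
          Finset.abs_sum_le_sum_abs _ _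
      _ ≤ ∑ _i : Fin (2*r+1), (2 * r : ℝ) ^ (2 * r) * ε := by
          apply Finset.sum_le_sum
          intro i _
          rw [Polynomial.eval_mul, Polynomial.eval_C, abs_mul]
          rw [mul_comm ((2 * r : ℝ) ^ (2 * r)) ε]
          apply mul_le_mul (hfp (v i) (nodes_mem hr hn i)) (basis_bound hr hn hs i)
            (abs_nonneg _) hεnn
      _ = (2*r+1) * (2 * r : ℝ) ^ (2 * r) * ε := by
          rw [Finset.sum_const, Finset.card_univ, Fintype.card_fin]
          push_cast; ring
  calc |f s - p.eval s - _| ≤ |f s - p.eval s| + |_| := abs_sub _ _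
    _ ≤ ε + (2*r+1) * (2 * r : ℝ) ^ (2 * r) * ε := add_le_add (hfp s hs) hinterp_bound
    _ = (1 + (2*r+1) * (2 * r : ℝ) ^ (2 * r)) * ε := by ring
end BasisBound

lemma iter_sub_icc {x : ℝ → ℝ} {m : ℕ} (hx : ContDiffOn ℝ m x (Icc (0:ℝ) 1))
    {a b : ℝ} (hab : a < b) (hsub : Icc a b ⊆ Icc (0:ℝ) 1) :
    ∀ k : ℕ, k ≤ m → ∀ u ∈ Icc a b,
      iteratedDerivWithin k x (Icc a b) u = iteratedDerivWithin k x (Icc (0:ℝ) 1) u := by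
  intro k
  induction k with
  | zero => intro _ u _; simp
  | succ k ih =>
    intro hk u hu
    have hk' : k ≤ m := by omega
    rw [iteratedDerivWithin_succ]
    rw [derivWithin_congr (fun w hw => ih hk' w hw) (ih hk' u hu)]
    have hdiff : DifferentiableOn ℝ (iteratedDerivWithin k x (Icc (0:ℝ) 1)) (Icc (0:ℝ) 1) :=
      hx.differentiableOn_iteratedDerivWithin (by exact_mod_cast hk) (uniqueDiffOn_Icc one_pos)
    have h1 : HasDerivWithinAt (iteratedDerivWithin k x (Icc (0:ℝ) 1))
        (derivWithin (iteratedDerivWithin k x (Icc (0:ℝ) 1)) (Icc (0:ℝ) 1) u) (Icc a b) u :=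
      ((hdiff u (hsub hu)).hasDerivWithinAt).mono hsub
    rw [h1.derivWithin ((uniqueDiffOn_Icc hab) u hu)]
    rw [iteratedDerivWithin_succ]

lemma nsmul_one_wb (k : ℕ) : k • (1 : WithBot ℕ) = (k : WithBot ℕ) := by
  induction k with
  | zero => simp
  | succ k ih => rw [succ_nsmul, ih]; push_cast; ring

/-- The Taylor polynomial as an honest `Polynomial`. -/
noncomputable def taylorPoly (x : ℝ → ℝ) (m : ℕ) (s : Set ℝ) (a : ℝ) : Polynomial ℝ :=
  ∑ k ∈ Finset.range (m+1),
    Polynomial.C (((k.factorial : ℝ))⁻¹ * iteratedDerivWithin k x s a) * (Polynomial.X - Polynomial.C a) ^ k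

lemma taylorPoly_eval (x : ℝ → ℝ) (m : ℕ) (s : Set ℝ) (a u : ℝ) :
    (taylorPoly x m s a).eval u = taylorWithinEval x m s a u := by
  rw [taylor_within_apply, taylorPoly, Polynomial.eval_finset_sum]
  apply Finset.sum_congr rfl
  intro k _
  simp [smul_eq_mul]
  ring

lemma taylorPoly_degree (x : ℝ → ℝ) (m : ℕ) (s : Set ℝ) (a : ℝ) :
    (taylorPoly x m s a).degree ≤ m := by
  apply (Polynomial.degree_sum_le _ _).trans
  rw [Finset.sup_le_iff]
  intro k hk
  apply (Polynomial.degree_mul_le _ _).trans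
  have h1 : (Polynomial.C (((k.factorial : ℝ))⁻¹ * iteratedDerivWithin k x s a)).degree ≤ 0 :=
    Polynomial.degree_C_le
  have h2 : ((Polynomial.X - Polynomial.C a : Polynomial ℝ) ^ k).degree ≤ k := by
    apply (Polynomial.degree_pow_le _ _).trans
    calc (k : ℕ) • (Polynomial.X - Polynomial.C a : Polynomial ℝ).degree
        ≤ (k : ℕ) • (1 : WithBot ℕ) := by
          apply nsmul_le_nsmul_right (Polynomial.degree_X_sub_C_le a)
      _ = (k : WithBot ℕ) := nsmul_one_wb k
  calc (Polynomial.C _).degree + ((Polynomial.X - Polynomial.C a : Polynomial ℝ) ^ k).degree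
      ≤ 0 + (k : WithBot ℕ) := add_le_add h1 h2
    _ = (k : WithBot ℕ) := zero_add _
    _ ≤ (m : WithBot ℕ) := by
        rw [Finset.mem_range] at hk
        exact_mod_cast Nat.cast_le.2 (by omega)

lemma bdd_of_compact {E : Type*} [NormedAddCommGroup E] {α : Type*} [TopologicalSpace α]
    {Ω : Set α} (hcomp : IsCompact Ω) {f : α → E} (hf : ContinuousOn f Ω) :
    ∃ M : ℝ, 0 ≤ M ∧ ∀ p ∈ Ω, ‖f p‖ ≤ M := by
  rcases Ω.eq_empty_or_nonempty with rfl | hne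
  · exact ⟨0, le_refl _, by simp⟩
  · obtain ⟨p₀, hp₀, hmax⟩ := hcomp.exists_isMaxOn hne (continuous_norm.comp_continuousOn hf)
    exact ⟨‖f p₀‖, norm_nonneg _, fun p hp => hmax hp⟩

lemma seg_dist {E : Type*} [NormedAddCommGroup E] [NormedSpace ℝ E] {p q z : E}
    (hz : z ∈ segment ℝ p q) : ‖z - p‖ ≤ ‖q - p‖ := by
  obtain ⟨a, b, ha, hb, hab, rfl⟩ := hz
  have he : a • p + b • q - p = b • (q - p) := by
    have : a = 1 - b := by linarith
    subst this
    rw [smul_sub, sub_smul, one_smul]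
    abel
  rw [he, norm_smul, Real.norm_eq_abs, abs_of_nonneg hb]
  nlinarith [norm_nonneg (q - p)]

lemma kernel_package {Ω : Set (ℝ×ℝ)} (hcomp : IsCompact Ω) (hconv : Convex ℝ Ω)
    (hne : (interior Ω).Nonempty) {F : ℝ×ℝ → ℝ} (hF : ContDiffOn ℝ 2 F Ω) :
    ∃ M : ℝ, 0 ≤ M ∧
      (∀ p ∈ Ω, |F p| ≤ M) ∧
      (∀ p ∈ Ω, ‖fderivWithin ℝ F Ω p‖ ≤ M) ∧
      (∀ p ∈ Ω, ∀ q ∈ Ω, |F q - F p| ≤ M * ‖q - p‖) ∧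
      (∀ p ∈ Ω, ∀ q ∈ Ω, |F q - F p - fderivWithin ℝ F Ω p (q - p)| ≤ M * ‖q - p‖^2) := by
  have hud : UniqueDiffOn ℝ Ω := uniqueDiffOn_convex hconv hne
  set D := fun p => fderivWithin ℝ F Ω p with hD
  obtain ⟨M₀, hM₀0, hM₀⟩ := bdd_of_compact hcomp (hF.continuousOn)
  have hDcont : ContinuousOn D Ω := hF.continuousOn_fderivWithin hud one_le_two
  obtain ⟨M₁, hM₁0, hM₁⟩ := bdd_of_compact hcomp hDcont
  have hDC1 : ContDiffOn ℝ 1 D Ω := hF.fderivWithin hud (by norm_num)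
  have hDdiff : DifferentiableOn ℝ D Ω := hDC1.differentiableOn one_ne_zero
  obtain ⟨M₂, hM₂0, hM₂⟩ := bdd_of_compact hcomp (hDC1.continuousOn_fderivWithin hud le_rfl)
  have hDlip : ∀ p ∈ Ω, ∀ q ∈ Ω, ‖D q - D p‖ ≤ M₂ * ‖q - p‖ := fun p hp q hq =>
    hconv.norm_image_sub_le_of_norm_fderivWithin_le hDdiff hM₂ hp hq
  refine ⟨max (max M₀ M₁) M₂, le_trans hM₀0 (le_trans (le_max_left _ _) (le_max_left _ _)), ?_, ?_, ?_, ?_⟩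
  · intro p hp
    calc |F p| = ‖F p‖ := rfl
      _ ≤ M₀ := hM₀ p hp
      _ ≤ _ := le_trans (le_max_left _ _) (le_max_left _ _)
  · intro p hp
    exact le_trans (hM₁ p hp) (le_trans (le_max_right _ _) (le_max_left _ _))
  · intro p hp q hq
    calc |F q - F p| = ‖F q - F p‖ := rfl
      _ ≤ M₁ * ‖q - p‖ :=
        hconv.norm_image_sub_le_of_norm_fderivWithin_le (hF.differentiableOn two_ne_zero) hM₁ hp hq
      _ ≤ _ := by
        apply mul_le_mul_of_nonneg_right _ (norm_nonneg _)
        exact le_trans (le_max_right _ _) (le_max_left _ _)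
  · intro p hp q hq
    set g := fun z => F z - D p z with hg
    have hseg : segment ℝ p q ⊆ Ω := hconv.segment_subset hp hq
    have hder : ∀ z ∈ segment ℝ p q, HasFDerivWithinAt g (D z - D p) (segment ℝ p q) z := by
      intro z hz
      have h1 : HasFDerivWithinAt F (D z) (segment ℝ p q) z :=
        ((hF.differentiableOn two_ne_zero) z (hseg hz)).hasFDerivWithinAt.mono hseg
      have h2 : HasFDerivWithinAt (fun z => D p z) (D p) (segment ℝ p q) z :=
        (D p).hasFDerivAt.hasFDerivWithinAt
      exact h1.sub h2
    have hbd : ∀ z ∈ segment ℝ p q, ‖D z - D p‖ ≤ M₂ * ‖q - p‖ := by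
      intro z hz
      calc ‖D z - D p‖ ≤ M₂ * ‖z - p‖ := hDlip p hp z (hseg hz)
        _ ≤ M₂ * ‖q - p‖ := mul_le_mul_of_nonneg_left (seg_dist hz) hM₂0
    have := (convex_segment p q).norm_image_sub_le_of_norm_hasFDerivWithin_le hder hbd
      (left_mem_segment ℝ p q) (right_mem_segment ℝ p q)
    have hgq : g q - g p = F q - F p - D p (q - p) := by
      simp only [hg]
      rw [map_sub]
      ring
    rw [hgq] at this
    calc |F q - F p - D p (q - p)| ≤ M₂ * ‖q - p‖ * ‖q - p‖ := this
      _ = M₂ * ‖q - p‖^2 := by ring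
      _ ≤ _ := by
        apply mul_le_mul_of_nonneg_right (le_max_right _ _) (by positivity)

abbrev Om1 : Set (ℝ×ℝ) := {p : ℝ × ℝ | 0 ≤ p.2 ∧ p.2 ≤ p.1 ∧ p.1 ≤ 1}
abbrev Om2 : Set (ℝ×ℝ) := {p : ℝ × ℝ | 0 ≤ p.1 ∧ p.1 ≤ p.2 ∧ p.2 ≤ 1}

lemma om1_compact : IsCompact Om1 := by
  have hclosed : IsClosed Om1 := by
    apply IsClosed.inter (isClosed_le continuous_const continuous_snd)
    exact IsClosed.inter (isClosed_le continuous_snd continuous_fst)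
      (isClosed_le continuous_fst continuous_const)
  apply IsCompact.of_isClosed_subset ((isCompact_Icc).prod isCompact_Icc) hclosed
  rintro ⟨s, t⟩ ⟨h1, h2, h3⟩
  exact ⟨⟨le_trans h1 h2, h3⟩, ⟨h1, le_trans h2 h3⟩⟩

lemma om1_subset : Om1 ⊆ (Icc (0:ℝ) 1) ×ˢ (Icc (0:ℝ) 1) := by
  rintro ⟨s, t⟩ ⟨h1, h2, h3⟩
  exact ⟨⟨le_trans h1 h2, h3⟩, ⟨h1, le_trans h2 h3⟩⟩

lemma om1_convex : Convex ℝ Om1 := by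
  intro p hp q hq a b ha hb hab
  obtain ⟨h1, h2, h3⟩ := hp
  obtain ⟨h4, h5, h6⟩ := hq
  refine ⟨?_, ?_, ?_⟩ <;> simp only [Prod.fst_add, Prod.snd_add, Prod.smul_fst, Prod.smul_snd,
    smul_eq_mul] <;> nlinarith

lemma om1_interior : (interior Om1).Nonempty := by
  refine ⟨(3/4, 1/4), ?_⟩
  rw [mem_interior]
  refine ⟨{p : ℝ×ℝ | 0 < p.2 ∧ p.2 < p.1 ∧ p.1 < 1}, ?_, ?_, by norm_num⟩
  · rintro ⟨s, t⟩ ⟨h1, h2, h3⟩; exact ⟨h1.le, h2.le, h3.le⟩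
  · apply IsOpen.inter (isOpen_lt continuous_const continuous_snd)
    exact IsOpen.inter (isOpen_lt continuous_snd continuous_fst)
      (isOpen_lt continuous_fst continuous_const)

lemma ii_congr {f g : ℝ → ℝ} {c d : ℝ} (hcd : c ≤ d) (h : ∀ t ∈ Ioc c d, f t = g t)
    (hf : IntervalIntegrable f volume c d) : IntervalIntegrable g volume c d := by
  rw [intervalIntegrable_iff_integrableOn_Ioc_of_le hcd] at *
  exact hf.congr_fun h measurableSet_Ioc

lemma intg {φ y : ℝ → ℝ} {c d Y : ℝ} (h0 : 0 ≤ c) (hcd : c ≤ d) (h1 : d ≤ 1)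
    (hφ : ContinuousOn φ (Icc c d))
    (hy : AEStronglyMeasurable y (volume.restrict (Ioc (0:ℝ) 1)))
    (hY : ∀ t ∈ Icc (0:ℝ) 1, |y t| ≤ Y) :
    IntervalIntegrable (fun t => φ t * y t) volume c d := by
  obtain ⟨Mφ, hMφ0, hMφ⟩ := bdd_of_compact isCompact_Icc hφ
  rw [intervalIntegrable_iff_integrableOn_Ioc_of_le hcd]
  have hsub : Ioc c d ⊆ Ioc 0 1 := Ioc_subset_Ioc h0 h1
  have hsub' : Ioc c d ⊆ Icc (0:ℝ) 1 := fun t ht => ⟨le_of_lt (lt_of_le_of_lt h0 ht.1), le_trans ht.2 h1⟩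
  have hmeas : AEStronglyMeasurable (fun t => φ t * y t) (volume.restrict (Ioc c d)) := by
    apply AEStronglyMeasurable.mul
    · exact ((hφ.mono Ioc_subset_Icc_self).aestronglyMeasurable measurableSet_Ioc)
    · exact hy.mono_measure (Measure.restrict_mono hsub le_rfl)
  apply Integrable.mono' (g := fun _ => Mφ * Y) _ hmeas
  · apply (ae_restrict_iff' measurableSet_Ioc).2
    apply ae_of_all
    intro t ht
    rw [Real.norm_eq_abs, abs_mul]
    exact mul_le_mul (hMφ t (Ioc_subset_Icc_self ht)) (hY t (hsub' ht)) (abs_nonneg _) hMφ0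
  · exact integrableOn_const measure_Ioc_lt_top.ne

section EBound

variable {κ₁ κ₂ : ℝ → ℝ → ℝ} {M : ℝ} {y : ℝ → ℝ} {Y : ℝ}

/-- The first partial derivatives of the kernels w.r.t. the first variable. -/
noncomputable def d1 (κ : ℝ → ℝ → ℝ) (Ω : Set (ℝ×ℝ)) (a t : ℝ) : ℝ :=
  (fderivWithin ℝ (Function.uncurry κ) Ω (a, t)) (1, 0)

theorem ebound
    (hdiag : ∀ u ∈ Icc (0:ℝ) 1, κ₁ u u = κ₂ u u)
    (hM0 : 0 ≤ M)
    (h₁c : ContinuousOn (Function.uncurry κ₁) Om1)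
    (h₂c : ContinuousOn (Function.uncurry κ₂) Om2)
    (h₁dc : ContinuousOn (fderivWithin ℝ (Function.uncurry κ₁) Om1) Om1)
    (h₂dc : ContinuousOn (fderivWithin ℝ (Function.uncurry κ₂) Om2) Om2)
    (h₁d : ∀ p ∈ Om1, ‖fderivWithin ℝ (Function.uncurry κ₁) Om1 p‖ ≤ M)
    (h₂d : ∀ p ∈ Om2, ‖fderivWithin ℝ (Function.uncurry κ₂) Om2 p‖ ≤ M)
    (h₁l : ∀ p ∈ Om1, ∀ q ∈ Om1,
      |Function.uncurry κ₁ q - Function.uncurry κ₁ p| ≤ M * ‖q - p‖)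
    (h₂l : ∀ p ∈ Om2, ∀ q ∈ Om2,
      |Function.uncurry κ₂ q - Function.uncurry κ₂ p| ≤ M * ‖q - p‖)
    (h₁t : ∀ p ∈ Om1, ∀ q ∈ Om1,
      |Function.uncurry κ₁ q - Function.uncurry κ₁ p
        - fderivWithin ℝ (Function.uncurry κ₁) Om1 p (q - p)| ≤ M * ‖q - p‖^2)
    (h₂t : ∀ p ∈ Om2, ∀ q ∈ Om2,
      |Function.uncurry κ₂ q - Function.uncurry κ₂ p
        - fderivWithin ℝ (Function.uncurry κ₂) Om2 p (q - p)| ≤ M * ‖q - p‖^2)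
    (hy : AEStronglyMeasurable y (volume.restrict (Ioc (0:ℝ) 1)))
    (hY : ∀ t ∈ Icc (0:ℝ) 1, |y t| ≤ Y)
    {a s : ℝ} (ha : 0 ≤ a) (has : a ≤ s) (hs : s ≤ 1) :
    |Kop κ₁ κ₂ y s - Kop κ₁ κ₂ y a
      - ((∫ t in (0:ℝ)..a, d1 κ₁ Om1 a t * y t)
         + ∫ t in a..(1:ℝ), d1 κ₂ Om2 a t * y t) * (s - a)|
      ≤ 4 * M * Y * (s - a)^2 := by
  have ha1 : a ≤ 1 := le_trans has hs
  have hs0 : 0 ≤ s := le_trans ha has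
  have hY0 : 0 ≤ Y := le_trans (abs_nonneg _) (hY 0 (by norm_num))
  -- membership helpers
  have mem1 : ∀ {u t : ℝ}, 0 ≤ t → t ≤ u → u ≤ 1 → ((u, t) : ℝ×ℝ) ∈ Om1 :=
    fun h1 h2 h3 => ⟨h1, h2, h3⟩
  have mem2 : ∀ {u t : ℝ}, 0 ≤ u → u ≤ t → t ≤ 1 → ((u, t) : ℝ×ℝ) ∈ Om2 :=
    fun h1 h2 h3 => ⟨h1, h2, h3⟩
  -- slice continuity
  have slice1 : ∀ {u : ℝ}, 0 ≤ u → u ≤ 1 → ContinuousOn (fun t => κ₁ u t) (Icc 0 u) := by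
    intro u hu0 hu1
    apply h₁c.comp (Continuous.continuousOn (continuous_const.prodMk continuous_id))
    intro t ht
    exact mem1 ht.1 ht.2 hu1
  have slice2 : ∀ {u : ℝ}, 0 ≤ u → u ≤ 1 → ContinuousOn (fun t => κ₂ u t) (Icc u 1) := by
    intro u hu0 hu1
    apply h₂c.comp (Continuous.continuousOn (continuous_const.prodMk continuous_id))
    intro t ht
    exact mem2 hu0 ht.1 ht.2
  have dslice1 : ContinuousOn (fun t => d1 κ₁ Om1 a t) (Icc 0 a) := by
    have hin : ContinuousOn (fun t => fderivWithin ℝ (Function.uncurry κ₁) Om1 (a, t)) (Icc 0 a) :=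
      h₁dc.comp (Continuous.continuousOn (continuous_const.prodMk continuous_id))
        (fun t ht => mem1 ht.1 ht.2 ha1)
    exact (ContinuousLinearMap.apply ℝ ℝ (((1:ℝ),(0:ℝ)) : ℝ×ℝ)).continuous.comp_continuousOn hin
  have dslice2 : ContinuousOn (fun t => d1 κ₂ Om2 a t) (Icc a 1) := by
    have hin : ContinuousOn (fun t => fderivWithin ℝ (Function.uncurry κ₂) Om2 (a, t)) (Icc a 1) :=
      h₂dc.comp (Continuous.continuousOn (continuous_const.prodMk continuous_id))
        (fun t ht => mem2 ha ht.1 ht.2)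
    exact (ContinuousLinearMap.apply ℝ ℝ (((1:ℝ),(0:ℝ)) : ℝ×ℝ)).continuous.comp_continuousOn hin
  -- basic norm computations in ℝ×ℝ
  have hnorm10 : ‖(((1:ℝ),(0:ℝ)) : ℝ×ℝ)‖ = 1 := by
    rw [Prod.norm_def]; simp
  have hnormsub : ∀ u v t : ℝ, ((u, t) : ℝ×ℝ) - (v, t) = ((u - v : ℝ), (0:ℝ)) := by
    intro u v t; rw [Prod.mk_sub_mk, sub_self]
  have hnormval : ∀ u v : ℝ, v ≤ u → ‖(((u - v : ℝ), (0:ℝ)) : ℝ×ℝ)‖ = u - v := by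
    intro u v huv
    rw [Prod.norm_def]
    simp only [norm_zero, Real.norm_eq_abs]
    rw [max_eq_left (abs_nonneg _), abs_of_nonneg (sub_nonneg.2 huv)]
  have happly : ∀ (κ : ℝ → ℝ → ℝ) (Ω : Set (ℝ×ℝ)) (c u v t : ℝ),
      fderivWithin ℝ (Function.uncurry κ) Ω (c, t) ((u - v : ℝ), (0:ℝ))
        = (u - v) * d1 κ Ω c t := by
    intro κ Ω c u v t
    have h1 : (((u - v:ℝ), (0:ℝ)) : ℝ×ℝ) = (u - v) • (((1:ℝ),(0:ℝ)) : ℝ×ℝ) := by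
      rw [Prod.smul_mk]; norm_num
    rw [h1, ContinuousLinearMap.map_smul, d1, smul_eq_mul]
  -- integrability of the pieces
  have hA1_0a : IntervalIntegrable (fun t => κ₁ s t * y t) volume 0 a :=
    intg le_rfl ha ha1 ((slice1 hs0 hs).mono (Icc_subset_Icc le_rfl has)) hy hY
  have hA1_as : IntervalIntegrable (fun t => κ₁ s t * y t) volume a s :=
    intg ha has hs ((slice1 hs0 hs).mono (Icc_subset_Icc ha le_rfl)) hy hY
  have hA1a_0a : IntervalIntegrable (fun t => κ₁ a t * y t) volume 0 a :=
    intg le_rfl ha ha1 (slice1 ha ha1) hy hY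
  have hA2_s1 : IntervalIntegrable (fun t => κ₂ s t * y t) volume s 1 :=
    intg hs0 hs le_rfl (slice2 hs0 hs) hy hY
  have hA2a_as : IntervalIntegrable (fun t => κ₂ a t * y t) volume a s :=
    intg ha has hs ((slice2 ha ha1).mono (Icc_subset_Icc le_rfl hs)) hy hY
  have hA2a_s1 : IntervalIntegrable (fun t => κ₂ a t * y t) volume s 1 :=
    intg hs0 hs le_rfl ((slice2 ha ha1).mono (Icc_subset_Icc has le_rfl)) hy hY
  have hB1 : IntervalIntegrable (fun t => d1 κ₁ Om1 a t * y t) volume 0 a :=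
    intg le_rfl ha ha1 dslice1 hy hY
  have hB2_as : IntervalIntegrable (fun t => d1 κ₂ Om2 a t * y t) volume a s :=
    intg ha has hs (dslice2.mono (Icc_subset_Icc le_rfl hs)) hy hY
  have hB2_s1 : IntervalIntegrable (fun t => d1 κ₂ Om2 a t * y t) volume s 1 :=
    intg hs0 hs le_rfl (dslice2.mono (Icc_subset_Icc has le_rfl)) hy hY
  -- the two kernels as functions of t
  set ker := fun t => (if t ≤ s then κ₁ s t else κ₂ s t) * y t with hker
  set kera := fun t => (if t ≤ a then κ₁ a t else κ₂ a t) * y t with hkera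
  have hker_0a : IntervalIntegrable ker volume 0 a :=
    ii_congr ha (fun t ht => by simp only [hker]; rw [if_pos (le_trans ht.2 has)]) hA1_0a
  have hker_as : IntervalIntegrable ker volume a s :=
    ii_congr has (fun t ht => by simp only [hker]; rw [if_pos ht.2]) hA1_as
  have hker_s1 : IntervalIntegrable ker volume s 1 :=
    ii_congr hs (fun t ht => by simp only [hker]; rw [if_neg (not_le.2 ht.1)]) hA2_s1
  have hkera_0a : IntervalIntegrable kera volume 0 a :=
    ii_congr ha (fun t ht => by simp only [hkera]; rw [if_pos ht.2]) hA1a_0a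
  have hkera_as : IntervalIntegrable kera volume a s := by
    apply ii_congr has (fun t ht => ?_) hA2a_as
    simp only [hkera]; rw [if_neg (not_le.2 ht.1)]
  have hkera_s1 : IntervalIntegrable kera volume s 1 := by
    apply ii_congr hs (fun t ht => ?_) hA2a_s1
    simp only [hkera]; rw [if_neg (not_le.2 (lt_of_le_of_lt has ht.1))]
  -- splitting Kop y s
  have eq_fs : Kop κ₁ κ₂ y s = (∫ t in (0:ℝ)..a, κ₁ s t * y t)
      + ((∫ t in a..s, κ₁ s t * y t) + (∫ t in s..(1:ℝ), κ₂ s t * y t)) := by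
    have h1 : Kop κ₁ κ₂ y s = ∫ t in (0:ℝ)..1, ker t := rfl
    rw [h1, ← intervalIntegral.integral_add_adjacent_intervals hker_0a (hker_as.trans hker_s1),
      ← intervalIntegral.integral_add_adjacent_intervals hker_as hker_s1]
    congr 1
    · apply intervalIntegral.integral_congr
      intro t ht
      rw [uIcc_of_le ha] at ht
      simp only [hker]; rw [if_pos (le_trans ht.2 has)]
    congr 1
    · apply intervalIntegral.integral_congr
      intro t ht
      rw [uIcc_of_le has] at ht
      simp only [hker]; rw [if_pos ht.2]
    · apply intervalIntegral.integral_congr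
      intro t ht
      rw [uIcc_of_le hs] at ht
      simp only [hker]
      by_cases htc : t ≤ s
      · have hts : t = s := le_antisymm htc ht.1
        subst hts
        rw [if_pos le_rfl, hdiag t ⟨le_trans ha (le_trans has ht.1), ht.2⟩]
      · rw [if_neg htc]
  -- splitting Kop y a
  have eq_fa : Kop κ₁ κ₂ y a = (∫ t in (0:ℝ)..a, κ₁ a t * y t)
      + ((∫ t in a..s, κ₂ a t * y t) + (∫ t in s..(1:ℝ), κ₂ a t * y t)) := by
    have h1 : Kop κ₁ κ₂ y a = ∫ t in (0:ℝ)..1, kera t := rfl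
    rw [h1, ← intervalIntegral.integral_add_adjacent_intervals hkera_0a (hkera_as.trans hkera_s1),
      ← intervalIntegral.integral_add_adjacent_intervals hkera_as hkera_s1]
    congr 1
    · apply intervalIntegral.integral_congr
      intro t ht
      rw [uIcc_of_le ha] at ht
      simp only [hkera]; rw [if_pos ht.2]
    congr 1
    · apply intervalIntegral.integral_congr
      intro t ht
      rw [uIcc_of_le has] at ht
      simp only [hkera]
      by_cases htc : t ≤ a
      · have hts : t = a := le_antisymm htc ht.1
        subst hts
        rw [if_pos le_rfl, hdiag t ⟨ha, ha1⟩]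
      · rw [if_neg htc]
    · apply intervalIntegral.integral_congr
      intro t ht
      rw [uIcc_of_le hs] at ht
      simp only [hkera]
      by_cases htc : t ≤ a
      · have hts : t = a := le_antisymm htc (le_trans has ht.1)
        subst hts
        rw [if_pos le_rfl, hdiag t ⟨ha, ha1⟩]
      · rw [if_neg htc]
  -- splitting G
  have eq_G : (∫ t in a..(1:ℝ), d1 κ₂ Om2 a t * y t)
      = (∫ t in a..s, d1 κ₂ Om2 a t * y t) + ∫ t in s..(1:ℝ), d1 κ₂ Om2 a t * y t :=
    (intervalIntegral.integral_add_adjacent_intervals hB2_as hB2_s1).symm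
  -- combined integrals
  have eqT1 : (∫ t in (0:ℝ)..a, κ₁ s t * y t) - (∫ t in (0:ℝ)..a, κ₁ a t * y t)
      - (s - a) * (∫ t in (0:ℝ)..a, d1 κ₁ Om1 a t * y t)
      = ∫ t in (0:ℝ)..a, (κ₁ s t - κ₁ a t - (s - a) * d1 κ₁ Om1 a t) * y t := by
    rw [← intervalIntegral.integral_const_mul,
      ← intervalIntegral.integral_sub hA1_0a hA1a_0a,
      ← intervalIntegral.integral_sub (hA1_0a.sub hA1a_0a) (hB1.const_mul _)]
    apply intervalIntegral.integral_congr
    intro t _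
    ring
  have eqT2 : (∫ t in a..s, κ₁ s t * y t) - (∫ t in a..s, κ₂ a t * y t)
      - (s - a) * (∫ t in a..s, d1 κ₂ Om2 a t * y t)
      = ∫ t in a..s, (κ₁ s t - κ₂ a t - (s - a) * d1 κ₂ Om2 a t) * y t := by
    rw [← intervalIntegral.integral_const_mul,
      ← intervalIntegral.integral_sub hA1_as hA2a_as,
      ← intervalIntegral.integral_sub (hA1_as.sub hA2a_as) (hB2_as.const_mul _)]
    apply intervalIntegral.integral_congr
    intro t _
    ring
  have eqT3 : (∫ t in s..(1:ℝ), κ₂ s t * y t) - (∫ t in s..(1:ℝ), κ₂ a t * y t)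
      - (s - a) * (∫ t in s..(1:ℝ), d1 κ₂ Om2 a t * y t)
      = ∫ t in s..(1:ℝ), (κ₂ s t - κ₂ a t - (s - a) * d1 κ₂ Om2 a t) * y t := by
    rw [← intervalIntegral.integral_const_mul,
      ← intervalIntegral.integral_sub hA2_s1 hA2a_s1,
      ← intervalIntegral.integral_sub (hA2_s1.sub hA2a_s1) (hB2_s1.const_mul _)]
    apply intervalIntegral.integral_congr
    intro t _
    ring
  -- the key algebraic identity
  have keyeq : Kop κ₁ κ₂ y s - Kop κ₁ κ₂ y a
      - ((∫ t in (0:ℝ)..a, d1 κ₁ Om1 a t * y t)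
         + ∫ t in a..(1:ℝ), d1 κ₂ Om2 a t * y t) * (s - a)
      = (∫ t in (0:ℝ)..a, (κ₁ s t - κ₁ a t - (s - a) * d1 κ₁ Om1 a t) * y t)
        + (∫ t in a..s, (κ₁ s t - κ₂ a t - (s - a) * d1 κ₂ Om2 a t) * y t)
        + ∫ t in s..(1:ℝ), (κ₂ s t - κ₂ a t - (s - a) * d1 κ₂ Om2 a t) * y t := by
    rw [eq_fs, eq_fa, eq_G, ← eqT1, ← eqT2, ← eqT3]
    ring
  -- bounds for the three pieces
  have bT1 : |∫ t in (0:ℝ)..a, (κ₁ s t - κ₁ a t - (s - a) * d1 κ₁ Om1 a t) * y t|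
      ≤ M * Y * (s - a)^2 := by
    have hptw : ∀ t ∈ Set.uIoc (0:ℝ) a,
        ‖(κ₁ s t - κ₁ a t - (s - a) * d1 κ₁ Om1 a t) * y t‖ ≤ M * (s - a)^2 * Y := by
      intro t ht
      rw [uIoc_of_le ha] at ht
      have hp : ((a, t) : ℝ×ℝ) ∈ Om1 := mem1 ht.1.le ht.2 ha1
      have hq : ((s, t) : ℝ×ℝ) ∈ Om1 := mem1 ht.1.le (le_trans ht.2 has) hs
      have htay := h₁t _ hp _ hq
      rw [hnormsub, happly, hnormval s a has] at htay
      simp only [Function.uncurry] at htay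
      rw [Real.norm_eq_abs, abs_mul]
      have hYt : |y t| ≤ Y := hY t ⟨ht.1.le, le_trans ht.2 ha1⟩
      exact mul_le_mul htay hYt (abs_nonneg _) (by positivity)
    have := intervalIntegral.norm_integral_le_of_norm_le_const hptw
    rw [Real.norm_eq_abs] at this
    calc |∫ t in (0:ℝ)..a, (κ₁ s t - κ₁ a t - (s - a) * d1 κ₁ Om1 a t) * y t|
        ≤ M * (s - a)^2 * Y * |a - 0| := this
      _ ≤ M * (s - a)^2 * Y * 1 := by
          apply mul_le_mul_of_nonneg_left _ (by positivity)
          rw [abs_of_nonneg (by linarith)]; linarith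
      _ = M * Y * (s - a)^2 := by ring
  have bT2 : |∫ t in a..s, (κ₁ s t - κ₂ a t - (s - a) * d1 κ₂ Om2 a t) * y t|
      ≤ 2 * M * Y * (s - a)^2 := by
    have hptw : ∀ t ∈ Set.uIoc a s,
        ‖(κ₁ s t - κ₂ a t - (s - a) * d1 κ₂ Om2 a t) * y t‖ ≤ 2 * M * (s - a) * Y := by
      intro t ht
      rw [uIoc_of_le has] at ht
      have ht0 : 0 ≤ t := le_trans ha ht.1.le
      have ht1 : t ≤ 1 := le_trans ht.2 hs
      have e1 : |κ₁ s t - κ₁ t t| ≤ M * (s - t) := by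
        have := h₁l ((t, t) : ℝ×ℝ) (mem1 ht0 le_rfl ht1) ((s, t) : ℝ×ℝ)
          (mem1 ht0 ht.2 hs)
        rw [hnormsub, hnormval s t ht.2] at this
        simpa [Function.uncurry] using this
      have e2 : |κ₂ t t - κ₂ a t| ≤ M * (t - a) := by
        have := h₂l ((a, t) : ℝ×ℝ) (mem2 ha ht.1.le ht1) ((t, t) : ℝ×ℝ)
          (mem2 ht0 le_rfl ht1)
        rw [hnormsub, hnormval t a ht.1.le] at this
        simpa [Function.uncurry] using this
      have e3 : |d1 κ₂ Om2 a t| ≤ M := by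
        have h1 := (fderivWithin ℝ (Function.uncurry κ₂) Om2 (a, t)).le_opNorm
          (((1:ℝ),(0:ℝ)) : ℝ×ℝ)
        rw [hnorm10, mul_one] at h1
        exact le_trans h1 (h₂d _ (mem2 ha ht.1.le ht1))
      have hdg : κ₁ t t = κ₂ t t := hdiag t ⟨ht0, ht1⟩
      have emain : |κ₁ s t - κ₂ a t - (s - a) * d1 κ₂ Om2 a t| ≤ 2 * M * (s - a) := by
        have edec : κ₁ s t - κ₂ a t - (s - a) * d1 κ₂ Om2 a t
            = (κ₁ s t - κ₁ t t) + (κ₂ t t - κ₂ a t) - (s - a) * d1 κ₂ Om2 a t := by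
          rw [hdg]; ring
        rw [edec]
        have habs : |(s - a) * d1 κ₂ Om2 a t| ≤ (s - a) * M := by
          rw [abs_mul, abs_of_nonneg (by linarith)]
          exact mul_le_mul_of_nonneg_left e3 (by linarith)
        calc |(κ₁ s t - κ₁ t t) + (κ₂ t t - κ₂ a t) - (s - a) * d1 κ₂ Om2 a t|
            ≤ |κ₁ s t - κ₁ t t| + |κ₂ t t - κ₂ a t| + |(s - a) * d1 κ₂ Om2 a t| := by
              apply (abs_sub _ _).trans
              apply add_le_add_left (abs_add_le _ _)
          _ ≤ M * (s - t) + M * (t - a) + (s - a) * M := add_le_add (add_le_add e1 e2) habs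
          _ = 2 * M * (s - a) := by ring
      rw [Real.norm_eq_abs, abs_mul]
      exact mul_le_mul emain (hY t ⟨ht0, ht1⟩) (abs_nonneg _)
        (mul_nonneg (by linarith) (by linarith))
    have := intervalIntegral.norm_integral_le_of_norm_le_const hptw
    rw [Real.norm_eq_abs] at this
    calc |∫ t in a..s, (κ₁ s t - κ₂ a t - (s - a) * d1 κ₂ Om2 a t) * y t|
        ≤ 2 * M * (s - a) * Y * |s - a| := this
      _ = 2 * M * Y * (s - a)^2 := by
          rw [abs_of_nonneg (by linarith)]; ring
  have bT3 : |∫ t in s..(1:ℝ), (κ₂ s t - κ₂ a t - (s - a) * d1 κ₂ Om2 a t) * y t|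
      ≤ M * Y * (s - a)^2 := by
    have hptw : ∀ t ∈ Set.uIoc s (1:ℝ),
        ‖(κ₂ s t - κ₂ a t - (s - a) * d1 κ₂ Om2 a t) * y t‖ ≤ M * (s - a)^2 * Y := by
      intro t ht
      rw [uIoc_of_le hs] at ht
      have hp : ((a, t) : ℝ×ℝ) ∈ Om2 := mem2 ha (le_trans has ht.1.le) ht.2
      have hq : ((s, t) : ℝ×ℝ) ∈ Om2 := mem2 hs0 ht.1.le ht.2
      have htay := h₂t _ hp _ hq
      rw [hnormsub, happly, hnormval s a has] at htay
      simp only [Function.uncurry] at htay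
      rw [Real.norm_eq_abs, abs_mul]
      have hYt : |y t| ≤ Y := hY t ⟨le_trans hs0 ht.1.le, ht.2⟩
      exact mul_le_mul htay hYt (abs_nonneg _) (by positivity)
    have := intervalIntegral.norm_integral_le_of_norm_le_const hptw
    rw [Real.norm_eq_abs] at this
    calc |∫ t in s..(1:ℝ), (κ₂ s t - κ₂ a t - (s - a) * d1 κ₂ Om2 a t) * y t|
        ≤ M * (s - a)^2 * Y * |1 - s| := this
      _ ≤ M * (s - a)^2 * Y * 1 := by
          apply mul_le_mul_of_nonneg_left _ (by positivity)
          rw [abs_of_nonneg (by linarith)]; linarith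
      _ = M * Y * (s - a)^2 := by ring
  rw [keyeq]
  calc |_ + _ + _| ≤ |_| + |_| + |_| := by
        apply (abs_add_le _ _).trans
        apply add_le_add_left (abs_add_le _ _)
    _ ≤ M * Y * (s - a)^2 + 2 * M * Y * (s - a)^2 + M * Y * (s - a)^2 :=
        add_le_add (add_le_add bT1 bT2) bT3
    _ = 4 * M * Y * (s - a)^2 := by ring


end EBound

end AUX

section MAIN
open Set MeasureTheory Polynomial Finset

lemma om2_compact : IsCompact Om2 := by
  have hclosed : IsClosed Om2 := by
    apply IsClosed.inter (isClosed_le continuous_const continuous_fst)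
    exact IsClosed.inter (isClosed_le continuous_fst continuous_snd)
      (isClosed_le continuous_snd continuous_const)
  apply IsCompact.of_isClosed_subset ((isCompact_Icc).prod isCompact_Icc) hclosed
  rintro ⟨s, t⟩ ⟨h1, h2, h3⟩
  exact ⟨⟨h1, le_trans h2 h3⟩, ⟨le_trans h1 h2, h3⟩⟩

lemma om2_convex : Convex ℝ Om2 := by
  intro p hp q hq a b ha hb hab
  obtain ⟨h1, h2, h3⟩ := hp
  obtain ⟨h4, h5, h6⟩ := hq
  refine ⟨?_, ?_, ?_⟩ <;> simp only [Prod.fst_add, Prod.snd_add, Prod.smul_fst, Prod.smul_snd,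
    smul_eq_mul] <;> nlinarith

lemma om2_interior : (interior Om2).Nonempty := by
  refine ⟨(1/4, 3/4), ?_⟩
  rw [mem_interior]
  refine ⟨{p : ℝ×ℝ | 0 < p.1 ∧ p.1 < p.2 ∧ p.2 < 1}, ?_, ?_, by norm_num⟩
  · rintro ⟨s, t⟩ ⟨h1, h2, h3⟩; exact ⟨h1.le, h2.le, h3.le⟩
  · apply IsOpen.inter (isOpen_lt continuous_const continuous_fst)
    exact IsOpen.inter (isOpen_lt continuous_fst continuous_snd)
      (isOpen_lt continuous_snd continuous_const)

lemma pn_measurable (r n : ℕ) (x : ℝ → ℝ) : Measurable (Pn r n x) := by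
  have hfl : Measurable (fun s : ℝ => ⌊s * (n:ℝ)⌋) :=
    Int.measurable_floor.comp (measurable_id.mul_const (n:ℝ))
  have h1 : Measurable (fun s => interpIdx n s) :=
    measurable_const.min (((Measurable.of_discrete (f := Int.toNat)).comp hfl).add
      measurable_const)
  have h2 : Measurable (fun q : ℝ × ℕ =>
      Polynomial.eval q.1 (Lagrange.interpolate (Finset.univ : Finset (Fin (2 * r + 1)))
        (nodes r n q.2) (fun k => x (nodes r n q.2 k)))) := by
    apply measurable_from_prod_countable_left
    intro j
    exact (Polynomial.continuous ((Lagrange.interpolate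
      (Finset.univ : Finset (Fin (2 * r + 1))) (nodes r n j))
        (fun k => x (nodes r n j k)))).measurable
  have : Pn r n x = (fun q : ℝ × ℕ =>
      Polynomial.eval q.1 (Lagrange.interpolate (Finset.univ : Finset (Fin (2 * r + 1)))
        (nodes r n q.2) (fun k => x (nodes r n q.2 k)))) ∘ (fun s => (s, interpIdx n s)) := rfl
  rw [this]
  exact h2.comp (measurable_id.prodMk h1)

lemma pn_err {r n : ℕ} (hr : 1 ≤ r) (hn : 1 ≤ n) (f : ℝ → ℝ) (ε : ℝ)
    (hε : ∀ j : ℕ, 1 ≤ j → j ≤ n → ∃ p : Polynomial ℝ, p.degree < (2*r+1 : ℕ) ∧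
      ∀ u ∈ Icc (((j:ℝ)-1)/n) ((j:ℝ)/n), |f u - p.eval u| ≤ ε) :
    ∀ s ∈ Icc (0:ℝ) 1, |f s - Pn r n f s| ≤ (1 + (2*r+1) * (2*(r:ℝ))^(2*r)) * ε := by
  intro s hs
  obtain ⟨hj1, hjn, hjl, hjr⟩ := interpIdx_mem hn hs
  obtain ⟨p, hdeg, hp⟩ := hε _ hj1 hjn
  exact interp_err hr hn hdeg hp ⟨hjl, hjr⟩

lemma stepA {r n : ℕ} (hr : 1 ≤ r) (hn : 1 ≤ n) (x : ℝ → ℝ)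
    (hx : ContDiffOn ℝ (2*r+1 : ℕ) x (Icc (0:ℝ) 1)) :
    ∀ t ∈ Icc (0:ℝ) 1, |x t - Pn r n x t| ≤ (1 + (2*r+1) * (2*(r:ℝ))^(2*r)) *
      ((⨆ t : Icc (0:ℝ) 1, |iteratedDerivWithin (2*r+1) x (Icc 0 1) t.1|) * (1/(n:ℝ))^(2*r+1)) := by
  have hn0 : (0:ℝ) < n := by exact_mod_cast hn
  set S := ⨆ t : Icc (0:ℝ) 1, |iteratedDerivWithin (2*r+1) x (Icc 0 1) t.1| with hSdef
  have hScont : ContinuousOn (iteratedDerivWithin (2*r+1) x (Icc 0 1)) (Icc (0:ℝ) 1) :=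
    hx.continuousOn_iteratedDerivWithin (by exact_mod_cast le_refl (2*r+1 : ℕ))
      (uniqueDiffOn_Icc one_pos)
  have hSb : ∀ u ∈ Icc (0:ℝ) 1, |iteratedDerivWithin (2*r+1) x (Icc 0 1) u| ≤ S := by
    intro u hu
    have hBdd : BddAbove (Set.range fun t : Icc (0:ℝ) 1 =>
        |iteratedDerivWithin (2*r+1) x (Icc 0 1) t.1|) := by
      obtain ⟨M, _, hM⟩ := bdd_of_compact isCompact_Icc hScont
      refine ⟨M, ?_⟩
      rintro v ⟨t, rfl⟩
      simpa [Real.norm_eq_abs] using hM t.1 t.2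
    exact le_ciSup hBdd (⟨u, hu⟩ : Icc (0:ℝ) 1)
  have hS0 : 0 ≤ S := le_trans (abs_nonneg _) (hSb 0 ⟨le_rfl, zero_le_one⟩)
  apply pn_err hr hn x (S * (1/(n:ℝ))^(2*r+1))
  intro j hj1 hjn
  set a := ((j:ℝ)-1)/n with hadef
  set b := (j:ℝ)/n with hbdef
  have hab : a < b := by
    rw [hadef, hbdef, div_lt_div_iff₀ hn0 hn0]
    nlinarith
  have ha0 : 0 ≤ a := by
    rw [hadef]
    apply div_nonneg _ hn0.le
    have : (1:ℝ) ≤ (j:ℝ) := by exact_mod_cast hj1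
    linarith
  have hb1 : b ≤ 1 := by
    rw [hbdef, div_le_one hn0]
    exact_mod_cast hjn
  have hcc : Icc a b ⊆ Icc (0:ℝ) 1 := Icc_subset_Icc ha0 hb1
  refine ⟨taylorPoly x (2*r) (Icc a b) a, ?_, ?_⟩
  · apply lt_of_le_of_lt (taylorPoly_degree x (2*r) (Icc a b) a)
    exact_mod_cast Nat.lt_succ_self (2*r)
  · intro u hu
    rw [taylorPoly_eval]
    have hxab : ContDiffOn ℝ ((2*r : ℕ) + 1 : ℕ) x (Icc a b) := by
      have : ContDiffOn ℝ (2*r+1 : ℕ) x (Icc a b) := hx.mono hcc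
      exact_mod_cast this
    have hC : ∀ v ∈ Icc a b, ‖iteratedDerivWithin ((2*r : ℕ)+1) x (Icc a b) v‖ ≤ S := by
      intro v hv
      rw [Real.norm_eq_abs]
      rw [iter_sub_icc hx hab hcc (2*r+1) le_rfl v hv]
      exact hSb v (hcc hv)
    have := taylor_mean_remainder_bound (n := 2*r) hab.le hxab hu hC
    rw [Real.norm_eq_abs] at this
    apply this.trans
    have hfact1 : (1:ℝ) ≤ ((2*r).factorial : ℝ) := by exact_mod_cast Nat.one_le_iff_ne_zero.2 (Nat.factorial_ne_zero _)
    have hua : u - a ≤ 1/(n:ℝ) := by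
      have : b - a = 1/(n:ℝ) := by rw [hadef, hbdef]; ring
      have := hu.2
      linarith [hu.2, this]
    have hua0 : 0 ≤ u - a := sub_nonneg.2 hu.1
    have hpow : (u - a)^(2*r+1) ≤ (1/(n:ℝ))^(2*r+1) := pow_le_pow_left₀ hua0 hua _
    calc S * (u - a)^(2*r+1) / ((2*r).factorial : ℝ)
        ≤ S * (u - a)^(2*r+1) := div_le_self (by positivity) hfact1
      _ ≤ S * (1/(n:ℝ))^(2*r+1) := mul_le_mul_of_nonneg_left hpow hS0

theorem stmt9_aux (r : ℕ) (hr : 1 ≤ r) (κ₁ κ₂ : ℝ → ℝ → ℝ)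
    (hκ₁ : ContDiffOn ℝ 2 (Function.uncurry κ₁) {p : ℝ × ℝ | 0 ≤ p.2 ∧ p.2 ≤ p.1 ∧ p.1 ≤ 1})
    (hκ₂ : ContDiffOn ℝ 2 (Function.uncurry κ₂) {p : ℝ × ℝ | 0 ≤ p.1 ∧ p.1 ≤ p.2 ∧ p.2 ≤ 1})
    (hdiag : ∀ s ∈ Icc (0:ℝ) 1, κ₁ s s = κ₂ s s) :
    ∃ C : ℝ, ∀ n : ℕ, 1 ≤ n → ∀ x : ℝ → ℝ, ContDiffOn ℝ (2 * r + 1 : ℕ) x (Icc (0:ℝ) 1) →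
      supNorm (Kop κ₁ κ₂ (fun s =>
          Kop κ₁ κ₂ (fun t => x t - Pn r n x t) s
            - Pn r n (Kop κ₁ κ₂ (fun t => x t - Pn r n x t)) s))
        ≤ C * (⨆ t : Set.Icc (0:ℝ) 1, |iteratedDerivWithin (2 * r + 1) x (Set.Icc 0 1) t.1|)
            * (1 / (n:ℝ)) ^ (2 * r + 3) := by
  have hκ₁' : ContDiffOn ℝ 2 (Function.uncurry κ₁) Om1 := hκ₁
  have hκ₂' : ContDiffOn ℝ 2 (Function.uncurry κ₂) Om2 := hκ₂
  obtain ⟨Ma, hMa0, hab1, had1, hal1, hat1⟩ :=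
    kernel_package om1_compact om1_convex om1_interior hκ₁'
  obtain ⟨Mb, hMb0, hbb1, hbd1, hbl1, hbt1⟩ :=
    kernel_package om2_compact om2_convex om2_interior hκ₂'
  set M := max Ma Mb with hM
  have hM0 : 0 ≤ M := le_trans hMa0 (le_max_left _ _)
  -- upgrade all bounds to M
  have hb1 : ∀ p ∈ Om1, |Function.uncurry κ₁ p| ≤ M :=
    fun p hp => le_trans (hab1 p hp) (le_max_left _ _)
  have hb2 : ∀ p ∈ Om2, |Function.uncurry κ₂ p| ≤ M :=
    fun p hp => le_trans (hbb1 p hp) (le_max_right _ _)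
  have hd1' : ∀ p ∈ Om1, ‖fderivWithin ℝ (Function.uncurry κ₁) Om1 p‖ ≤ M :=
    fun p hp => le_trans (had1 p hp) (le_max_left _ _)
  have hd2' : ∀ p ∈ Om2, ‖fderivWithin ℝ (Function.uncurry κ₂) Om2 p‖ ≤ M :=
    fun p hp => le_trans (hbd1 p hp) (le_max_right _ _)
  have hl1' : ∀ p ∈ Om1, ∀ q ∈ Om1,
      |Function.uncurry κ₁ q - Function.uncurry κ₁ p| ≤ M * ‖q - p‖ :=
    fun p hp q hq => le_trans (hal1 p hp q hq)
      (mul_le_mul_of_nonneg_right (le_max_left _ _) (norm_nonneg _))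
  have hl2' : ∀ p ∈ Om2, ∀ q ∈ Om2,
      |Function.uncurry κ₂ q - Function.uncurry κ₂ p| ≤ M * ‖q - p‖ :=
    fun p hp q hq => le_trans (hbl1 p hp q hq)
      (mul_le_mul_of_nonneg_right (le_max_right _ _) (norm_nonneg _))
  have ht1' : ∀ p ∈ Om1, ∀ q ∈ Om1,
      |Function.uncurry κ₁ q - Function.uncurry κ₁ p
        - fderivWithin ℝ (Function.uncurry κ₁) Om1 p (q - p)| ≤ M * ‖q - p‖^2 :=
    fun p hp q hq => le_trans (hat1 p hp q hq)
      (mul_le_mul_of_nonneg_right (le_max_left _ _) (by positivity))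
  have ht2' : ∀ p ∈ Om2, ∀ q ∈ Om2,
      |Function.uncurry κ₂ q - Function.uncurry κ₂ p
        - fderivWithin ℝ (Function.uncurry κ₂) Om2 p (q - p)| ≤ M * ‖q - p‖^2 :=
    fun p hp q hq => le_trans (hbt1 p hp q hq)
      (mul_le_mul_of_nonneg_right (le_max_right _ _) (by positivity))
  have h₁c : ContinuousOn (Function.uncurry κ₁) Om1 := hκ₁'.continuousOn
  have h₂c : ContinuousOn (Function.uncurry κ₂) Om2 := hκ₂'.continuousOn
  have hud1 : UniqueDiffOn ℝ Om1 := uniqueDiffOn_convex om1_convex om1_interior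
  have hud2 : UniqueDiffOn ℝ Om2 := uniqueDiffOn_convex om2_convex om2_interior
  have h₁dc : ContinuousOn (fderivWithin ℝ (Function.uncurry κ₁) Om1) Om1 :=
    hκ₁'.continuousOn_fderivWithin hud1 one_le_two
  have h₂dc : ContinuousOn (fderivWithin ℝ (Function.uncurry κ₂) Om2) Om2 :=
    hκ₂'.continuousOn_fderivWithin hud2 one_le_two
  -- the Lebesgue-type constant
  have hΛ1 : (1:ℝ) ≤ 1 + (2*r+1) * (2*(r:ℝ))^(2*r) := by
    have : (0:ℝ) ≤ (2*r+1) * (2*(r:ℝ))^(2*r) := by positivity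
    linarith
  have hΛ0 : (0:ℝ) ≤ 1 + (2*r+1) * (2*(r:ℝ))^(2*r) := le_trans zero_le_one hΛ1
  refine ⟨4 * M^2 * (1 + (2*r+1) * (2*(r:ℝ))^(2*r))^2, ?_⟩
  intro n hn x hx
  have hn0 : (0:ℝ) < n := by exact_mod_cast hn
  set y := fun t => x t - Pn r n x t with hydef
  set S := ⨆ t : Set.Icc (0:ℝ) 1, |iteratedDerivWithin (2 * r + 1) x (Set.Icc 0 1) t.1|
    with hSdef
  set Y := (1 + (2*r+1) * (2*(r:ℝ))^(2*r)) * (S * (1/(n:ℝ))^(2*r+1)) with hYdef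
  have hyb : ∀ t ∈ Icc (0:ℝ) 1, |y t| ≤ Y := stepA hr hn x hx
  have hY0 : 0 ≤ Y := le_trans (abs_nonneg _) (hyb 0 ⟨le_rfl, zero_le_one⟩)
  have hymeas : AEStronglyMeasurable y (volume.restrict (Ioc (0:ℝ) 1)) := by
    apply AEStronglyMeasurable.sub
    · exact ((hx.continuousOn).mono Ioc_subset_Icc_self).aestronglyMeasurable measurableSet_Ioc
    · exact ((pn_measurable r n x).aestronglyMeasurable).restrict
  set f := Kop κ₁ κ₂ y with hfdef
  -- bound on the second interpolation error
  have hzb : ∀ t ∈ Icc (0:ℝ) 1, |f t - Pn r n f t|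
      ≤ (1 + (2*r+1) * (2*(r:ℝ))^(2*r)) * (4 * M * Y * (1/(n:ℝ))^2) := by
    apply pn_err hr hn f (4 * M * Y * (1/(n:ℝ))^2)
    intro j hj1 hjn
    set a := ((j:ℝ)-1)/n with hadef
    set b := (j:ℝ)/n with hbdef
    have ha0 : 0 ≤ a := by
      rw [hadef]
      apply div_nonneg _ hn0.le
      have : (1:ℝ) ≤ (j:ℝ) := by exact_mod_cast hj1
      linarith
    have hb1 : b ≤ 1 := by
      rw [hbdef, div_le_one hn0]
      exact_mod_cast hjn
    have hba : b - a = 1/(n:ℝ) := by rw [hadef, hbdef]; ring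
    refine ⟨Polynomial.C (f a) + Polynomial.C ((∫ t in (0:ℝ)..a, d1 κ₁ Om1 a t * y t)
        + ∫ t in a..(1:ℝ), d1 κ₂ Om2 a t * y t) * (Polynomial.X - Polynomial.C a), ?_, ?_⟩
    · apply lt_of_le_of_lt (Polynomial.degree_add_le _ _)
      apply max_lt
      · apply lt_of_le_of_lt Polynomial.degree_C_le
        have h0 : (0:ℕ) < 2*r+1 := by omega
        exact_mod_cast h0
      · apply lt_of_le_of_lt (Polynomial.degree_mul_le _ _)
        calc (Polynomial.C _).degree + (Polynomial.X - Polynomial.C a).degree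
            ≤ 0 + 1 := add_le_add Polynomial.degree_C_le (Polynomial.degree_X_sub_C_le a)
          _ = ((1:ℕ) : WithBot ℕ) := by norm_num
          _ < ((2*r+1 : ℕ) : WithBot ℕ) := by
              have h1 : (1:ℕ) < 2*r+1 := by omega
              exact_mod_cast h1
    · intro u hu
      have heval : Polynomial.eval u (Polynomial.C (f a)
          + Polynomial.C ((∫ t in (0:ℝ)..a, d1 κ₁ Om1 a t * y t)
            + ∫ t in a..(1:ℝ), d1 κ₂ Om2 a t * y t) * (Polynomial.X - Polynomial.C a))
          = f a + ((∫ t in (0:ℝ)..a, d1 κ₁ Om1 a t * y t)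
            + ∫ t in a..(1:ℝ), d1 κ₂ Om2 a t * y t) * (u - a) := by
        simp [Polynomial.eval_add, Polynomial.eval_mul, Polynomial.eval_sub]
      rw [heval]
      have hre : f u - (f a + ((∫ t in (0:ℝ)..a, d1 κ₁ Om1 a t * y t)
            + ∫ t in a..(1:ℝ), d1 κ₂ Om2 a t * y t) * (u - a))
          = f u - f a - ((∫ t in (0:ℝ)..a, d1 κ₁ Om1 a t * y t)
            + ∫ t in a..(1:ℝ), d1 κ₂ Om2 a t * y t) * (u - a) := by ring
      rw [hre]
      have heb := ebound hdiag hM0 h₁c h₂c h₁dc h₂dc hd1' hd2' hl1' hl2' ht1' ht2'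
        hymeas hyb ha0 hu.1 (le_trans hu.2 hb1)
      apply heb.trans
      have hua : u - a ≤ 1/(n:ℝ) := by
        have := hu.2
        linarith [hu.2, hba]
      have hua0 : 0 ≤ u - a := sub_nonneg.2 hu.1
      have hpow : (u - a)^2 ≤ (1/(n:ℝ))^2 := by nlinarith
      calc 4 * M * Y * (u - a)^2 ≤ 4 * M * Y * (1/(n:ℝ))^2 := by
            apply mul_le_mul_of_nonneg_left hpow (by positivity)
        _ = _ := rfl
  -- the outer operator bound
  have hZ0 : 0 ≤ (1 + (2*r+1) * (2*(r:ℝ))^(2*r)) * (4 * M * Y * (1/(n:ℝ))^2) := by positivity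
  have houter : ∀ s ∈ Icc (0:ℝ) 1, |Kop κ₁ κ₂ (fun t => f t - Pn r n f t) s|
      ≤ M * ((1 + (2*r+1) * (2*(r:ℝ))^(2*r)) * (4 * M * Y * (1/(n:ℝ))^2)) := by
    intro s hs
    have hptw : ∀ t ∈ Set.uIoc (0:ℝ) 1,
        ‖(if t ≤ s then κ₁ s t else κ₂ s t) * (f t - Pn r n f t)‖
          ≤ M * ((1 + (2*r+1) * (2*(r:ℝ))^(2*r)) * (4 * M * Y * (1/(n:ℝ))^2)) := by
      intro t ht
      rw [uIoc_of_le zero_le_one] at ht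
      rw [Real.norm_eq_abs, abs_mul]
      have hzt := hzb t ⟨ht.1.le, ht.2⟩
      by_cases htc : t ≤ s
      · rw [if_pos htc]
        have hk : |κ₁ s t| ≤ M := hb1 ((s, t) : ℝ×ℝ) ⟨ht.1.le, htc, hs.2⟩
        exact mul_le_mul hk hzt (abs_nonneg _) hM0
      · rw [if_neg htc]
        have hk : |κ₂ s t| ≤ M := hb2 ((s, t) : ℝ×ℝ) ⟨hs.1, (not_le.1 htc).le, ht.2⟩
        exact mul_le_mul hk hzt (abs_nonneg _) hM0
    have hres := intervalIntegral.norm_integral_le_of_norm_le_const hptw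
    rw [Real.norm_eq_abs] at hres
    have : Kop κ₁ κ₂ (fun t => f t - Pn r n f t) s
        = ∫ t in (0:ℝ)..1, (if t ≤ s then κ₁ s t else κ₂ s t) * (f t - Pn r n f t) := rfl
    rw [this]
    simpa using hres
  -- finish
  have hfinal : M * ((1 + (2*r+1) * (2*(r:ℝ))^(2*r)) * (4 * M * Y * (1/(n:ℝ))^2))
      = 4 * M^2 * (1 + (2*r+1) * (2*(r:ℝ))^(2*r))^2 * S * (1/(n:ℝ))^(2*r+3) := by
    have hpow : (1/(n:ℝ))^(2*r+3) = (1/(n:ℝ))^(2*r+1) * (1/(n:ℝ))^2 := by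
      rw [← pow_add]
    rw [hYdef, hpow]
    ring
  simp only [_root_.supNorm]
  apply Real.iSup_le
  · intro t
    exact le_trans (houter t.1 t.2) (le_of_eq hfinal)
  · rw [← hfinal]
    positivity


end MAIN


/-- there is a constant `C`, independent of `n` and `x`, such that for every
`n ≥ 1` and every `x ∈ C^{2r+1}[0,1]`,
`‖K(I − Pₙ)K(I − Pₙ)x‖∞ ≤ C ‖x^{(2r+1)}‖∞ h^{2r+3}`. -/
theorem stmt9 (r : ℕ) (hr : 1 ≤ r) (κ₁ κ₂ : ℝ → ℝ → ℝ)
    -- κ₁, κ₂ are twice continuously differentiable on Ω₁, Ω₂ respectively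
    (hκ₁ : ContDiffOn ℝ 2 (Function.uncurry κ₁) {p : ℝ × ℝ | 0 ≤ p.2 ∧ p.2 ≤ p.1 ∧ p.1 ≤ 1})
    (hκ₂ : ContDiffOn ℝ 2 (Function.uncurry κ₂) {p : ℝ × ℝ | 0 ≤ p.1 ∧ p.1 ≤ p.2 ∧ p.2 ≤ 1})
    -- they agree on the diagonal
    (hdiag : ∀ s ∈ Icc (0:ℝ) 1, κ₁ s s = κ₂ s s) :
    ∃ C : ℝ, ∀ n : ℕ, 1 ≤ n → ∀ x : ℝ → ℝ, ContDiffOn ℝ (2 * r + 1 : ℕ) x (Icc (0:ℝ) 1) →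
      supNorm (Kop κ₁ κ₂ (fun s =>
          Kop κ₁ κ₂ (fun t => x t - Pn r n x t) s
            - Pn r n (Kop κ₁ κ₂ (fun t => x t - Pn r n x t)) s))
        ≤ C * (⨆ t : Set.Icc (0:ℝ) 1, |iteratedDerivWithin (2 * r + 1) x (Set.Icc 0 1) t.1|)
            * (1 / (n:ℝ)) ^ (2 * r + 3) := by
  exact stmt9_aux r hr κ₁ κ₂ hκ₁ hκ₂ hdiag
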